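/- Let v*_D(x) denote the minimum of z ↦ (1/2)‖x − Dz‖₂² + λ‖z‖₁. Suppose ‖x‖₂ ≤ 1 + ν, ‖D − D'‖₂ ≤ ε (operator norm), and ε(1+ν)²/(2λ) ≤ 1. Then v*_{D'}(x) ≤ v*_D(x) + (5ε/(4λ))(1+ν)², and hence |v*_{D'}(x) − v*_D(x)| ≤ (5ε/(4λ))(1+ν)². -/

import Mathlib

/-!
Substitute the minimizer `α` for `D` into the objective for `D'`. Comparing with `z = 0` gives
`‖x − Dα‖₂ ≤ ‖x‖₂ ≤ 1 + ν` and `λ‖α‖₂ ≤ λ‖α‖₁ ≤ (1 + ν)²/2`, so the extra residual `(D − D')α` has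
norm `b ≤ β := ε(1 + ν)²/(2λ) ≤ 1`. Expanding the square, the objective grows by at most
`(1 + ν) b + b²/2 ≤ 2β + β/2`. The bound is symmetric in `D` and `D'`, whence the absolute value.
-/

open scoped BigOperators
open Finset

noncomputable def l2 {n : ℕ} (x : Fin n → ℝ) : ℝ := Real.sqrt (∑ i, (x i) ^ 2)

noncomputable def l1 {n : ℕ} (x : Fin n → ℝ) : ℝ := ∑ i, |x i|

noncomputable def inp {n : ℕ} (x y : Fin n → ℝ) : ℝ := ∑ i, x i * y i

/-- The Lasso objective `z ↦ (1/2)‖x − Dz‖₂² + λ‖z‖₁`. -/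
noncomputable def lassoObj {d p : ℕ} (D : Matrix (Fin d) (Fin p) ℝ) (lam : ℝ)
    (x : Fin d → ℝ) (z : Fin p → ℝ) : ℝ :=
  (1 / 2) * (l2 (x - D.mulVec z)) ^ 2 + lam * l1 z

open scoped Matrix

section Norms

variable {n : ℕ}

lemma l2_eq_norm_toLp (x : Fin n → ℝ) : l2 x = ‖WithLp.toLp 2 x‖ := by
  simp [l2, EuclideanSpace.norm_eq, sq_abs]

lemma l2_nonneg (x : Fin n → ℝ) : 0 ≤ l2 x := Real.sqrt_nonneg _

lemma l2_neg (x : Fin n → ℝ) : l2 (-x) = l2 x := by simp [l2]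

lemma l2_add_le (x y : Fin n → ℝ) : l2 (x + y) ≤ l2 x + l2 y := by
  simpa only [l2_eq_norm_toLp, WithLp.toLp_add] using norm_add_le _ _

lemma l1_nonneg (x : Fin n → ℝ) : 0 ≤ l1 x := sum_nonneg fun _ _ => abs_nonneg _

lemma l2_le_l1 (x : Fin n → ℝ) : l2 x ≤ l1 x := by
  have hsq : ∑ i, x i ^ 2 ≤ (∑ i, |x i|) ^ 2 := by
    simpa only [sq_abs] using sum_sq_le_sq_sum_of_nonneg fun i _ => abs_nonneg (x i)
  exact Real.sqrt_le_iff.2 ⟨l1_nonneg x, hsq⟩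

end Norms

section Lasso

variable {d p : ℕ} (D D' : Matrix (Fin d) (Fin p) ℝ) (lam : ℝ) (x : Fin d → ℝ)

lemma lassoObj_zero : lassoObj D lam x 0 = 1 / 2 * l2 x ^ 2 := by
  simp [lassoObj, l1]

lemma lassoObj_perturb_le (z : Fin p → ℝ) :
    lassoObj D' lam x z ≤ lassoObj D lam x z +
      (l2 (x - D *ᵥ z) * l2 ((D - D') *ᵥ z) + l2 ((D - D') *ᵥ z) ^ 2 / 2) := by
  have hsplit : x - D' *ᵥ z = (x - D *ᵥ z) + (D - D') *ᵥ z := by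
    rw [Matrix.sub_mulVec]; abel
  have htri : l2 (x - D' *ᵥ z) ≤ l2 (x - D *ᵥ z) + l2 ((D - D') *ᵥ z) :=
    hsplit ▸ l2_add_le _ _
  have hsq := pow_le_pow_left₀ (l2_nonneg _) htri 2
  simp only [lassoObj]
  linarith

variable {D lam x}

lemma l2_residual_le_of_lassoObj_le_zero (hlam : 0 ≤ lam) {α : Fin p → ℝ}
    (hα : lassoObj D lam x α ≤ lassoObj D lam x 0) : l2 (x - D *ᵥ α) ≤ l2 x := by
  rw [lassoObj_zero, lassoObj] at hα
  have := mul_nonneg hlam (l1_nonneg α)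
  exact (pow_le_pow_iff_left₀ (l2_nonneg _) (l2_nonneg _) two_ne_zero).1 (by linarith)

lemma mul_l1_le_of_lassoObj_le_zero {α : Fin p → ℝ}
    (hα : lassoObj D lam x α ≤ lassoObj D lam x 0) : lam * l1 α ≤ 1 / 2 * l2 x ^ 2 := by
  rw [lassoObj_zero, lassoObj] at hα
  linarith [sq_nonneg (l2 (x - D *ᵥ α))]

end Lasso

lemma mul_add_sq_half_le {a b C β : ℝ} (ha : a ≤ C) (hC : C ≤ 2) (hb0 : 0 ≤ b) (hb : b ≤ β)
    (hβ : β ≤ 1) : a * b + b ^ 2 / 2 ≤ 5 / 2 * β := by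
  nlinarith [mul_le_mul_of_nonneg_right ha hb0, mul_le_mul_of_nonneg_right hb hb0]

lemma lassoObj_le_add_of_perturb_le {d p : ℕ} {D D' : Matrix (Fin d) (Fin p) ℝ} {lam ε C : ℝ}
    (hlam : 0 < lam) (hε : 0 ≤ ε) (hC : C ≤ 2) (hεsmall : ε * C ^ 2 / (2 * lam) ≤ 1)
    {x : Fin d → ℝ} (hx : l2 x ≤ C) {α α' : Fin p → ℝ}
    (hop : l2 ((D - D') *ᵥ α) ≤ ε * l2 α)
    (hmin : lassoObj D lam x α ≤ lassoObj D lam x 0)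
    (hmin' : lassoObj D' lam x α' ≤ lassoObj D' lam x α) :
    lassoObj D' lam x α' ≤ lassoObj D lam x α + 5 * ε / (4 * lam) * C ^ 2 := by
  have hα : l2 α ≤ C ^ 2 / (2 * lam) := by
    have hCsq : l2 x ^ 2 ≤ C ^ 2 := pow_le_pow_left₀ (l2_nonneg x) hx 2
    have hl1 : lam * l2 α ≤ lam * l1 α := mul_le_mul_of_nonneg_left (l2_le_l1 α) hlam.le
    rw [le_div_iff₀ (by positivity)]
    linarith [mul_l1_le_of_lassoObj_le_zero hmin]
  have hb : l2 ((D - D') *ᵥ α) ≤ ε * C ^ 2 / (2 * lam) :=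
    hop.trans (by rw [mul_div_assoc]; exact mul_le_mul_of_nonneg_left hα hε)
  have hgrowth := mul_add_sq_half_le
    ((l2_residual_le_of_lassoObj_le_zero hlam.le hmin).trans hx) hC (l2_nonneg _) hb hεsmall
  have hK : 5 / 2 * (ε * C ^ 2 / (2 * lam)) = 5 * ε / (4 * lam) * C ^ 2 := by
    field_simp; ring
  linarith [lassoObj_perturb_le D D' lam x α]

theorem stmt5_general {d p : ℕ} (D D' : Matrix (Fin d) (Fin p) ℝ) (lam ν ε : ℝ)
    (hlam : 0 < lam) (hν1 : ν ≤ 1) (hε0 : 0 ≤ ε)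
    (hεsmall : ε * (1 + ν) ^ 2 / (2 * lam) ≤ 1)
    (x : Fin d → ℝ) (hx : l2 x ≤ 1 + ν)
    (hop : ∀ z : Fin p → ℝ, l2 ((D - D').mulVec z) ≤ ε * l2 z)
    (α : Fin p → ℝ) (hmin : ∀ z, lassoObj D lam x α ≤ lassoObj D lam x z)
    (α' : Fin p → ℝ) (hmin' : ∀ z, lassoObj D' lam x α' ≤ lassoObj D' lam x z) :
    lassoObj D' lam x α' ≤ lassoObj D lam x α + (5 * ε / (4 * lam)) * (1 + ν) ^ 2 ∧
      |lassoObj D' lam x α' - lassoObj D lam x α| ≤ (5 * ε / (4 * lam)) * (1 + ν) ^ 2 := by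
  have hC : 1 + ν ≤ 2 := by linarith
  have hop' : l2 ((D' - D) *ᵥ α') ≤ ε * l2 α' := by
    rw [← neg_sub, Matrix.neg_mulVec, l2_neg]
    exact hop α'
  have hle := lassoObj_le_add_of_perturb_le hlam hε0 hC hεsmall hx (hop α) (hmin 0) (hmin' α)
  have hge := lassoObj_le_add_of_perturb_le hlam hε0 hC hεsmall hx hop' (hmin' 0) (hmin α')
  exact ⟨hle, abs_sub_le_iff.2 ⟨by linarith, by linarith⟩⟩

/-- stability of the Lasso optimal value under dictionary perturbations. -/
theorem stmt5 {d p : ℕ} (D D' : Matrix (Fin d) (Fin p) ℝ) (lam ν ε : ℝ)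
    (hlam : 0 < lam) (hν : 0 ≤ ν) (hν1 : ν ≤ 1) (hε0 : 0 ≤ ε)
    (hεsmall : ε * (1 + ν) ^ 2 / (2 * lam) ≤ 1)
    (x : Fin d → ℝ) (hx : l2 x ≤ 1 + ν)
    (hop : ∀ z : Fin p → ℝ, l2 ((D - D').mulVec z) ≤ ε * l2 z)
    (α : Fin p → ℝ) (hmin : ∀ z, lassoObj D lam x α ≤ lassoObj D lam x z)
    (α' : Fin p → ℝ) (hmin' : ∀ z, lassoObj D' lam x α' ≤ lassoObj D' lam x z) :
    lassoObj D' lam x α' ≤ lassoObj D lam x α + (5 * ε / (4 * lam)) * (1 + ν) ^ 2 ∧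
      |lassoObj D' lam x α' - lassoObj D lam x α| ≤ (5 * ε / (4 * lam)) * (1 + ν) ^ 2 :=
  stmt5_general D D' lam ν ε hlam hν1 hε0 hεsmall x hx hop α hmin α' hmin'
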